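/- arXiv:1307.6149 — 4 statements merged into one kernel-verified Lean document; each statement's English description precedes it below -/
import Mathlib

section
/- Let X, Y be independent nonnegative unbounded random variables both in 𝓙. Then the following are equivalent: (i) X ∨ Y ∈ 𝓙; (ii) X + Y ∈ 𝓙; (iii) any mixture Z with distribution pF_X + (1−p)F_Y for p ∈ (0,1) belongs to 𝓙. -/
open MeasureTheory Filter Set

/-- Tail of a distribution: `F̄(x) = μ(x, ∞)`. -/
noncomputable def tail (μ : Measure ℝ) (x : ℝ) : ℝ := (μ (Set.Ioi x)).toReal

/-- Conditional probability `P(A | X₁ + X₂ > x)` for two i.i.d. variables with law `μ`. -/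
noncomputable def condPair (μ : Measure ℝ) (A : Set (ℝ × ℝ)) (x : ℝ) : ℝ :=
  ((μ.prod μ) (A ∩ {p | x < p.1 + p.2})).toReal / ((μ.prod μ) {p | x < p.1 + p.2}).toReal

/-- The class 𝓙 : `lim_{K→∞} liminf_{x→∞} P(max(X₁,X₂) > x − K | X₁ + X₂ > x) = 1`. -/
def MemJ (μ : Measure ℝ) : Prop :=
  Tendsto (fun K : ℝ =>
      liminf (fun x : ℝ => condPair μ {p | x - K < max p.1 p.2} x) atTop)
    atTop (nhds 1)

/-- The class 𝓙 (equivalent form): for every nonnegative, unbounded, nondecreasing `g`,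
`lim_{x→∞} P(min(X₁,X₂) > g(x) | X₁ + X₂ > x) = 0`. -/
def MemJg (μ : Measure ℝ) : Prop :=
  ∀ g : ℝ → ℝ, (∀ x, 0 ≤ g x) → Monotone g → (∀ M, ∃ x, M < g x) →
    Tendsto (fun x : ℝ => condPair μ {p | g x < min p.1 p.2} x) atTop (nhds 0)

/-- Tail of the two-fold convolution: `F̄²*(x) = P(X₁ + X₂ > x)`. -/
noncomputable def tail2 (μ : Measure ℝ) (x : ℝ) : ℝ := ((μ.prod μ) {p | x < p.1 + p.2}).toReal

/-- Weak asymptotic tail-equivalence `F̄ ≍ Ḡ`: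
`0 < liminf F̄(x)/Ḡ(x) ≤ limsup F̄(x)/Ḡ(x) < ∞`. -/
def WeakTailEquiv (μ ν : Measure ℝ) : Prop :=
  (∃ c : ℝ, 0 < c ∧ ∀ᶠ x in atTop, c * tail ν x ≤ tail μ x) ∧
  (∃ C : ℝ, ∀ᶠ x in atTop, tail μ x ≤ C * tail ν x)

/-- Convolution of two laws on ℝ. -/
noncomputable def conv (μ ν : Measure ℝ) : Measure ℝ :=
  Measure.map (fun p : ℝ × ℝ => p.1 + p.2) (μ.prod ν)

/-- `n`-fold convolution `F^{n*}`. -/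
noncomputable def nconv (μ : Measure ℝ) : ℕ → Measure ℝ
  | 0 => Measure.dirac 0
  | n + 1 => conv (nconv μ n) μ

/-!
The whole argument runs on one comparison principle. If `ν(u, ∞) ≤ C ρ(u, ∞)` for all `u`, then
`(ν ⊗ ν)(S) ≤ C² (ρ ⊗ ρ)(S)` for `S = {s + t > x}` and `S = {min s t > a, s + t > x}`, because
every section of these sets is a half-line or empty. So if, in addition, the tails of `ρ * ρ`
are at most a constant times the tails of `ν * ν`, the conditional probabilities defining `𝓙`
for `ν` are at most a constant times those for `ρ`, and `ρ ∈ 𝓙` gives `ν ∈ 𝓙`.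

For `M = law(X ∨ Y)` and a mixture `ζ`, we have `ζ̄ ≤ M̄ ≤ (min p (1-p))⁻¹ ζ̄`, since
`M̄ ≤ F̄_X + F̄_Y`. For the sum `σ = law(X + Y)`, nonnegativity gives `M̄ ≤ σ̄`, and independence
gives `σ̄ ≤` the tail of `M * M`. A law `ν ∈ 𝓙` lies in `𝓞𝓢`: for some fixed `K` the tail of
`ν * ν` at `x` is at most `4 ν̄(x - K)` (otherwise, along points `xₙ → ∞`, the event
`{min > n}` keeps half of the conditional mass, which a `g` with `g(xₙ) ≤ n` forbids), and
`ν̄(x - K) ν̄(2K)` is at most the tail of `ν * ν` at `x + K`. So whichever of `M`, `σ` lies in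
`𝓙` has its convolution tail bounded by its own tail, which closes the comparison both ways.
-/

open scoped ENNReal

theorem MeasureTheory.Measure.prod_apply_le_of_sections {α β : Type*} [MeasurableSpace α]
    [MeasurableSpace β] {κ₁ ρ₁ : Measure α} {κ₂ ρ₂ : Measure β} [SFinite κ₁] [SFinite ρ₁]
    [SFinite κ₂] [SFinite ρ₂] {s : Set (α × β)} (hs : MeasurableSet s) {C₁ C₂ : ℝ≥0∞}
    (h₁ : ∀ b, κ₁ ((fun a => (a, b)) ⁻¹' s) ≤ C₁ * ρ₁ ((fun a => (a, b)) ⁻¹' s))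
    (h₂ : ∀ a, κ₂ (Prod.mk a ⁻¹' s) ≤ C₂ * ρ₂ (Prod.mk a ⁻¹' s)) :
    (κ₁.prod κ₂) s ≤ C₁ * C₂ * (ρ₁.prod ρ₂) s :=
  calc (κ₁.prod κ₂) s = ∫⁻ a, κ₂ (Prod.mk a ⁻¹' s) ∂κ₁ := Measure.prod_apply hs
    _ ≤ ∫⁻ a, C₂ * ρ₂ (Prod.mk a ⁻¹' s) ∂κ₁ := lintegral_mono h₂
    _ = C₂ * ∫⁻ b, κ₁ ((fun a => (a, b)) ⁻¹' s) ∂ρ₂ := by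
      rw [lintegral_const_mul _ (measurable_measure_prodMk_left hs), ← Measure.prod_apply hs,
        Measure.prod_apply_symm hs]
    _ ≤ C₂ * ∫⁻ b, C₁ * ρ₁ ((fun a => (a, b)) ⁻¹' s) ∂ρ₂ := by gcongr with b; exact h₁ b
    _ = C₁ * C₂ * (ρ₁.prod ρ₂) s := by
      rw [lintegral_const_mul _ (measurable_measure_prodMk_right hs), ← Measure.prod_apply_symm hs,
        mul_left_comm, mul_assoc]

def sumGt (x : ℝ) : Set (ℝ × ℝ) := {p | x < p.1 + p.2}

def minGt (a : ℝ) : Set (ℝ × ℝ) := {p | a < min p.1 p.2}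

lemma measurableSet_sumGt (x : ℝ) : MeasurableSet (sumGt x) :=
  measurableSet_lt measurable_const (measurable_fst.add measurable_snd)

lemma measurableSet_minGt (a : ℝ) : MeasurableSet (minGt a) :=
  measurableSet_lt measurable_const (measurable_fst.min measurable_snd)

lemma minGt_anti : Antitone minGt :=
  fun _ _ hab _ hp => lt_of_le_of_lt hab hp

lemma condPair_minGt (μ : Measure ℝ) (a x : ℝ) :
    condPair μ {p | a < min p.1 p.2} x =
      ((μ.prod μ) (minGt a ∩ sumGt x) / (μ.prod μ) (sumGt x)).toReal :=
  (ENNReal.toReal_div _ _).symm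

lemma mk_preimage_sumGt_right (x t : ℝ) : Prod.mk t ⁻¹' sumGt x = Ioi (x - t) := by
  ext; simp [sumGt, sub_lt_iff_lt_add']

lemma mk_preimage_sumGt_left (x t : ℝ) : (fun s => (s, t)) ⁻¹' sumGt x = Ioi (x - t) := by
  ext; simp [sumGt, sub_lt_iff_lt_add]

lemma mk_preimage_minGt_inter_sumGt_right (a x t : ℝ) :
    Prod.mk t ⁻¹' (minGt a ∩ sumGt x) = if a < t then Ioi (max a (x - t)) else ∅ := by
  ext y; split_ifs with h <;> simp [minGt, sumGt, h, sub_lt_iff_lt_add']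

lemma mk_preimage_minGt_inter_sumGt_left (a x t : ℝ) :
    (fun s => (s, t)) ⁻¹' (minGt a ∩ sumGt x) = if a < t then Ioi (max a (x - t)) else ∅ := by
  ext y; split_ifs with h <;> simp [minGt, sumGt, h, sub_lt_iff_lt_add, and_comm]

section TailComparison

variable {κ₁ κ₂ ρ₁ ρ₂ : Measure ℝ} [SFinite κ₁] [SFinite ρ₁] [SFinite κ₂] [SFinite ρ₂]
  {C₁ C₂ : ℝ≥0∞}

lemma prod_sumGt_le (h₁ : ∀ u, κ₁ (Ioi u) ≤ C₁ * ρ₁ (Ioi u))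
    (h₂ : ∀ u, κ₂ (Ioi u) ≤ C₂ * ρ₂ (Ioi u)) (x : ℝ) :
    (κ₁.prod κ₂) (sumGt x) ≤ C₁ * C₂ * (ρ₁.prod ρ₂) (sumGt x) :=
  Measure.prod_apply_le_of_sections (measurableSet_sumGt x)
    (fun t => by simpa only [mk_preimage_sumGt_left] using h₁ _)
    (fun t => by simpa only [mk_preimage_sumGt_right] using h₂ _)

lemma prod_minGt_inter_sumGt_le (h₁ : ∀ u, κ₁ (Ioi u) ≤ C₁ * ρ₁ (Ioi u))
    (h₂ : ∀ u, κ₂ (Ioi u) ≤ C₂ * ρ₂ (Ioi u)) (a x : ℝ) :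
    (κ₁.prod κ₂) (minGt a ∩ sumGt x) ≤ C₁ * C₂ * (ρ₁.prod ρ₂) (minGt a ∩ sumGt x) :=
  Measure.prod_apply_le_of_sections ((measurableSet_minGt a).inter (measurableSet_sumGt x))
    (fun t => by rw [mk_preimage_minGt_inter_sumGt_left]; split_ifs <;> simp [h₁])
    (fun t => by rw [mk_preimage_minGt_inter_sumGt_right]; split_ifs <;> simp [h₂])

end TailComparison

lemma Ioi_mul_Ioi_le_prod_sumGt (ν : Measure ℝ) [SFinite ν] (a b : ℝ) :
    ν (Ioi a) * ν (Ioi b) ≤ (ν.prod ν) (sumGt (a + b)) := by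
  rw [← Measure.prod_prod]
  exact measure_mono fun p ⟨(ha : a < p.1), (hb : b < p.2)⟩ =>
    show a + b < p.1 + p.2 from add_lt_add ha hb

lemma prod_sumGt_pos {ν : Measure ℝ} [SFinite ν] (hν : ∀ u, 0 < ν (Ioi u)) (x : ℝ) :
    0 < (ν.prod ν) (sumGt x) := by
  have h := Ioi_mul_Ioi_le_prod_sumGt ν (x - 1) 1
  rw [sub_add_cancel] at h
  exact (ENNReal.mul_pos (hν _).ne' (hν _).ne').trans_le h

lemma prod_sumGt_le_minGt_add (ν : Measure ℝ) [IsProbabilityMeasure ν] (K x : ℝ) :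
    (ν.prod ν) (sumGt x) ≤ (ν.prod ν) (minGt K ∩ sumGt x) + 2 * ν (Ioi (x - K)) := by
  have hsub : sumGt x ⊆ (minGt K ∩ sumGt x) ∪ ((univ ×ˢ Ioi (x - K)) ∪ (Ioi (x - K) ×ˢ univ)) := by
    rintro ⟨s, t⟩ (hst : x < s + t)
    by_cases hs : K < s <;> by_cases ht : K < t
    · exact Or.inl ⟨lt_min hs ht, hst⟩
    all_goals
      right
      simp only [mem_union, mem_prod, mem_univ, mem_Ioi, true_and, and_true]
      first | left; linarith | right; linarith
  calc (ν.prod ν) (sumGt x)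
      ≤ (ν.prod ν) (minGt K ∩ sumGt x)
        + ((ν.prod ν) (univ ×ˢ Ioi (x - K)) + (ν.prod ν) (Ioi (x - K) ×ˢ univ)) :=
        (measure_mono hsub).trans
          ((measure_union_le _ _).trans (add_le_add le_rfl (measure_union_le _ _)))
    _ = (ν.prod ν) (minGt K ∩ sumGt x) + 2 * ν (Ioi (x - K)) := by
      rw [Measure.prod_prod, Measure.prod_prod, measure_univ, one_mul, mul_one, two_mul]

lemma exists_monotone_le_of_tendsto {xs : ℕ → ℝ} (hxs : Tendsto xs atTop atTop) :
    ∃ g : ℝ → ℝ, (∀ x, 0 ≤ g x) ∧ Monotone g ∧ (∀ M, ∃ x, M < g x) ∧ ∀ n, g (xs n) ≤ n := by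
  classical
  have hex : ∀ x, ∃ n, x ≤ xs n := fun x => (hxs.eventually_ge_atTop x).exists
  refine ⟨fun x => Nat.find (hex x), fun x => Nat.cast_nonneg _,
    fun x y hxy => Nat.cast_le.mpr (Nat.find_mono fun n hn => hxy.trans hn), fun M => ?_,
    fun n => Nat.cast_le.mpr (Nat.find_min' _ le_rfl)⟩
  obtain ⟨B, hB⟩ := ((finite_Iic ⌈M⌉₊).image xs).bddAbove
  refine ⟨B + 1, (Nat.le_ceil M).trans_lt (Nat.cast_lt.mpr ?_)⟩
  by_contra! hle
  have := hB (mem_image_of_mem xs (mem_Iic.mpr hle))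
  linarith [Nat.find_spec (hex (B + 1))]

lemma MemJg.exists_prod_sumGt_le_Ioi_sub {ν : Measure ℝ} [IsProbabilityMeasure ν] (hJ : MemJg ν) :
    ∃ K : ℝ, ∀ᶠ x in atTop, (ν.prod ν) (sumGt x) ≤ 4 * ν (Ioi (x - K)) := by
  by_contra! hbad
  have hseq : ∀ n : ℕ, ∃ x, (n : ℝ) ≤ x ∧ 4 * ν (Ioi (x - n)) < (ν.prod ν) (sumGt x) :=
    fun n => (((hbad n).and_eventually (eventually_ge_atTop (n : ℝ))).exists).imp
      fun _ h => ⟨h.2, h.1⟩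
  choose xs hxs_ge hxs_bad using hseq
  have hxs : Tendsto xs atTop atTop := tendsto_atTop_mono hxs_ge tendsto_natCast_atTop_atTop
  obtain ⟨g, hg0, hgm, hgu, hgxs⟩ := exists_monotone_le_of_tendsto hxs
  obtain ⟨n, hn⟩ := (((hJ g hg0 hgm hgu).comp hxs).eventually
    (gt_mem_nhds (by norm_num : (0 : ℝ) < 1 / 2))).exists
  refine (not_lt.mpr ?_) hn
  simp only [Function.comp_apply, condPair_minGt, ENNReal.toReal_div]
  set D := (ν.prod ν) (sumGt (xs n))
  set N := (ν.prod ν) (minGt (g (xs n)) ∩ sumGt (xs n))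
  set T := ν (Ioi (xs n - n))
  have hND : (ν.prod ν) (minGt n ∩ sumGt (xs n)) ≤ N :=
    measure_mono (inter_subset_inter_left _ (minGt_anti (hgxs n)))
  have hcover := (prod_sumGt_le_minGt_add ν n (xs n)).trans (add_le_add hND le_rfl)
  have hD : 0 < D.toReal := ENNReal.toReal_pos (pos_of_gt (hxs_bad n)).ne' (measure_ne_top _ _)
  have hcover' : D.toReal ≤ N.toReal + 2 * T.toReal := by
    have h := ENNReal.toReal_mono (by finiteness) hcover
    rwa [ENNReal.toReal_add (by finiteness) (by finiteness), ENNReal.toReal_mul,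
      ENNReal.toReal_ofNat] at h
  have hbad' : 4 * T.toReal < D.toReal := by
    simpa [ENNReal.toReal_mul] using
      (ENNReal.toReal_lt_toReal (by finiteness) (measure_ne_top _ _)).mpr (hxs_bad n)
  rw [le_div_iff₀ hD]
  linarith

-- The inclusion `𝓙 ⊂ 𝓞𝓢`.
lemma MemJg.exists_prod_sumGt_le {ν : Measure ℝ} [IsProbabilityMeasure ν] (hJ : MemJg ν)
    (hν : ∀ u, 0 < ν (Ioi u)) :
    ∃ C : ℝ≥0∞, C ≠ ∞ ∧ ∀ᶠ x in atTop, (ν.prod ν) (sumGt x) ≤ C * ν (Ioi x) := by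
  obtain ⟨K, hK⟩ := hJ.exists_prod_sumGt_le_Ioi_sub
  refine ⟨16 / ν (Ioi (2 * K)), ENNReal.div_ne_top (by norm_num) (hν _).ne', ?_⟩
  filter_upwards [hK, (tendsto_atTop_add_const_right atTop K tendsto_id).eventually hK]
    with x hx hxK
  have hprod : ν (Ioi (x - K)) * ν (Ioi (2 * K)) ≤ 4 * ν (Ioi x) := by
    have h := Ioi_mul_Ioi_le_prod_sumGt ν (x - K) (2 * K)
    rw [show x - K + 2 * K = x + K by ring] at h
    simpa using h.trans hxK
  have htail : ν (Ioi (x - K)) ≤ 4 * ν (Ioi x) / ν (Ioi (2 * K)) :=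
    (ENNReal.le_div_iff_mul_le (Or.inl (hν _).ne') (Or.inl (measure_ne_top _ _))).mpr hprod
  calc (ν.prod ν) (sumGt x) ≤ 4 * (4 * ν (Ioi x) / ν (Ioi (2 * K))) := hx.trans (by gcongr)
    _ = 16 / ν (Ioi (2 * K)) * ν (Ioi x) := by
      simp only [div_eq_mul_inv]
      ring

lemma exists_forall_Ioi_le_of_eventually {ν ρ : Measure ℝ} [IsFiniteMeasure ν]
    [IsFiniteMeasure ρ] (hρ : ∀ u, 0 < ρ (Ioi u)) {C : ℝ≥0∞} (hC : C ≠ ∞)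
    (h : ∀ᶠ x in atTop, ν (Ioi x) ≤ C * ρ (Ioi x)) :
    ∃ C' : ℝ≥0∞, C' ≠ ∞ ∧ ∀ x, ν (Ioi x) ≤ C' * ρ (Ioi x) := by
  obtain ⟨x₀, h₀⟩ := eventually_atTop.mp h
  refine ⟨C + ν univ / ρ (Ioi x₀), by finiteness [(hρ x₀).ne'], fun x => ?_⟩
  rcases le_or_gt x₀ x with hx | hx
  · exact (h₀ x hx).trans (by gcongr; exact le_self_add)
  · calc ν (Ioi x) ≤ ν univ / ρ (Ioi x₀) * ρ (Ioi x₀) := by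
          rw [ENNReal.div_mul_cancel (hρ x₀).ne' (measure_ne_top _ _)]
          exact measure_mono (subset_univ _)
      _ ≤ (C + ν univ / ρ (Ioi x₀)) * ρ (Ioi x) := by
          gcongr
          exact le_add_self

lemma MemJg.of_Ioi_le {ν ρ : Measure ℝ} [IsFiniteMeasure ν] [IsFiniteMeasure ρ] (hJ : MemJg ρ)
    (hρ : ∀ u, 0 < ρ (Ioi u)) {C c : ℝ≥0∞} (hC : C ≠ ∞) (hc : c ≠ ∞)
    (htail : ∀ᶠ x in atTop, ν (Ioi x) ≤ C * ρ (Ioi x))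
    (hconv : ∀ᶠ x in atTop, (ρ.prod ρ) (sumGt x) ≤ c * (ν.prod ν) (sumGt x)) : MemJg ν := by
  obtain ⟨C', hC', hdom⟩ := exists_forall_Ioi_le_of_eventually hρ hC htail
  intro g hg0 hgm hgu
  have hlim := (hJ g hg0 hgm hgu).const_mul (C' * C' * c).toReal
  rw [mul_zero] at hlim
  refine squeeze_zero' (Eventually.of_forall fun x => ENNReal.toReal_nonneg.trans_eq
    (condPair_minGt ν _ x).symm) ?_ hlim
  filter_upwards [hconv] with x hx
  have hρx := (prod_sumGt_pos hρ x).ne'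
  simp only [condPair_minGt, ← ENNReal.toReal_mul]
  refine ENNReal.toReal_mono (ENNReal.mul_ne_top (by finiteness)
    (ENNReal.div_ne_top (measure_ne_top _ _) hρx)) ?_
  calc (ν.prod ν) (minGt (g x) ∩ sumGt x) / (ν.prod ν) (sumGt x)
      ≤ C' * C' * (ρ.prod ρ) (minGt (g x) ∩ sumGt x) / (ν.prod ν) (sumGt x) :=
        ENNReal.div_le_div_right (prod_minGt_inter_sumGt_le hdom hdom _ _) _
    _ ≤ C' * C' * (ρ.prod ρ) (minGt (g x) ∩ sumGt x) / ((ρ.prod ρ) (sumGt x) / c) :=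
        ENNReal.div_le_div_left (ENNReal.div_le_of_le_mul' hx) _
    _ = C' * C' * c * ((ρ.prod ρ) (minGt (g x) ∩ sumGt x) / (ρ.prod ρ) (sumGt x)) := by
        rw [div_eq_mul_inv _ (_ / c), ENNReal.inv_div (Or.inl hc) (Or.inr hρx)]
        simp only [div_eq_mul_inv]
        ring

lemma memJg_iff_of_Ioi_le_of_le_prod_sumGt {M σ : Measure ℝ} [IsProbabilityMeasure M]
    [IsProbabilityMeasure σ] (hM : ∀ u, 0 < M (Ioi u)) (hMσ : ∀ u, M (Ioi u) ≤ σ (Ioi u))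
    (hσM : ∀ u, σ (Ioi u) ≤ (M.prod M) (sumGt u)) : MemJg M ↔ MemJg σ := by
  have hσ : ∀ u, 0 < σ (Ioi u) := fun u => (hM u).trans_le (hMσ u)
  have hMσ' : ∀ u, M (Ioi u) ≤ 1 * σ (Ioi u) := by simpa using hMσ
  constructor
  · intro hJ
    obtain ⟨C, hC, hOS⟩ := hJ.exists_prod_sumGt_le hM
    exact hJ.of_Ioi_le hM hC ENNReal.one_ne_top (hOS.mono fun x hx => (hσM x).trans hx)
      (Eventually.of_forall fun x => by simpa using prod_sumGt_le hMσ' hMσ' x)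
  · intro hJ
    obtain ⟨C, hC, hOS⟩ := hJ.exists_prod_sumGt_le hσ
    exact hJ.of_Ioi_le hσ ENNReal.one_ne_top hC (Eventually.of_forall hMσ')
      (hOS.mono fun x hx => hx.trans (by gcongr; exact hσM x))

lemma memJg_iff_of_Ioi_le {ν ρ : Measure ℝ} [IsFiniteMeasure ν] [IsFiniteMeasure ρ]
    (hρ : ∀ u, 0 < ρ (Ioi u)) {C C' : ℝ≥0∞} (hC : C ≠ ∞) (hC' : C' ≠ ∞)
    (hνρ : ∀ u, ν (Ioi u) ≤ C * ρ (Ioi u)) (hρν : ∀ u, ρ (Ioi u) ≤ C' * ν (Ioi u)) :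
    MemJg ν ↔ MemJg ρ := by
  have hν : ∀ u, 0 < ν (Ioi u) := fun u =>
    pos_iff_ne_zero.mpr fun h => (hρ u).ne' (by simpa [h] using hρν u)
  exact ⟨fun hJ => hJ.of_Ioi_le hν hC' (ENNReal.mul_ne_top hC hC) (Eventually.of_forall hρν)
      (Eventually.of_forall (prod_sumGt_le hνρ hνρ)),
    fun hJ => hJ.of_Ioi_le hρ hC (ENNReal.mul_ne_top hC' hC') (Eventually.of_forall hνρ)
      (Eventually.of_forall (prod_sumGt_le hρν hρν))⟩

section RandomVariables

variable {Ω : Type*} [MeasurableSpace Ω] {P : Measure Ω} {X Y : Ω → ℝ}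

lemma map_apply_Ioi {f : Ω → ℝ} (hf : Measurable f) (u : ℝ) :
    P.map f (Ioi u) = P {ω | u < f ω} :=
  Measure.map_apply hf measurableSet_Ioi

lemma map_Ioi_le_map_Ioi {f g : Ω → ℝ} (hf : Measurable f) (hg : Measurable g)
    (hfg : ∀ ω, f ω ≤ g ω) (u : ℝ) : P.map f (Ioi u) ≤ P.map g (Ioi u) := by
  rw [map_apply_Ioi hf, map_apply_Ioi hg]
  exact measure_mono fun ω (h : u < f ω) => show u < g ω from h.trans_le (hfg ω)

lemma map_max_Ioi_le (hX : Measurable X) (hY : Measurable Y) (u : ℝ) :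
    P.map (fun ω => max (X ω) (Y ω)) (Ioi u) ≤ P.map X (Ioi u) + P.map Y (Ioi u) := by
  rw [map_apply_Ioi (hX.max hY), map_apply_Ioi hX, map_apply_Ioi hY]
  exact (measure_mono fun ω (h : u < max (X ω) (Y ω)) => lt_max_iff.mp h).trans
    (measure_union_le _ _)

lemma map_add_Ioi_eq [IsFiniteMeasure P] (hX : Measurable X) (hY : Measurable Y)
    (hind : ProbabilityTheory.IndepFun X Y P) (u : ℝ) :
    P.map (fun ω => X ω + Y ω) (Ioi u) = ((P.map X).prod (P.map Y)) (sumGt u) := by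
  rw [← (ProbabilityTheory.indepFun_iff_map_prod_eq_prod_map_map hX.aemeasurable
    hY.aemeasurable).mp hind, map_apply_Ioi (f := fun ω => X ω + Y ω) (hX.add hY),
    Measure.map_apply (hX.prodMk hY) (measurableSet_sumGt u)]
  rfl

theorem memJg_map_max_iff_map_add [IsProbabilityMeasure P] (hX : Measurable X)
    (hY : Measurable Y) (hXnn : ∀ ω, 0 ≤ X ω) (hYnn : ∀ ω, 0 ≤ Y ω)
    (hXub : ∀ t : ℝ, 0 < P {ω | t < X ω}) (hind : ProbabilityTheory.IndepFun X Y P) :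
    MemJg (P.map fun ω => max (X ω) (Y ω)) ↔ MemJg (P.map fun ω => X ω + Y ω) := by
  have hmax : Measurable fun ω => max (X ω) (Y ω) := hX.max hY
  have hadd : Measurable fun ω => X ω + Y ω := hX.add hY
  have := Measure.isProbabilityMeasure_map (μ := P) hmax.aemeasurable
  have := Measure.isProbabilityMeasure_map (μ := P) hadd.aemeasurable
  have hXM : ∀ u, P.map X (Ioi u) ≤ 1 * P.map (fun ω => max (X ω) (Y ω)) (Ioi u) := by
    simpa using map_Ioi_le_map_Ioi hX hmax fun ω => le_max_left _ _
  have hYM : ∀ u, P.map Y (Ioi u) ≤ 1 * P.map (fun ω => max (X ω) (Y ω)) (Ioi u) := by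
    simpa using map_Ioi_le_map_Ioi hY hmax fun ω => le_max_right _ _
  refine memJg_iff_of_Ioi_le_of_le_prod_sumGt (fun u => ?_)
    (map_Ioi_le_map_Ioi hmax hadd fun ω => max_le (le_add_of_nonneg_right (hYnn ω))
      (le_add_of_nonneg_left (hXnn ω))) (fun u => ?_)
  · calc 0 < P {ω | u < X ω} := hXub u
      _ = P.map X (Ioi u) := (map_apply_Ioi hX u).symm
      _ ≤ _ := by simpa using hXM u
  · simpa [map_add_Ioi_eq hX hY hind] using prod_sumGt_le hXM hYM u

theorem memJg_map_max_iff_mixture [IsProbabilityMeasure P] (hX : Measurable X)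
    (hY : Measurable Y) (hXub : ∀ t : ℝ, 0 < P {ω | t < X ω}) {p : ℝ} (hp : 0 < p)
    (hp1 : p < 1) :
    MemJg (P.map fun ω => max (X ω) (Y ω)) ↔
      MemJg (ENNReal.ofReal p • P.map X + ENNReal.ofReal (1 - p) • P.map Y) := by
  have hmax : Measurable fun ω => max (X ω) (Y ω) := hX.max hY
  have := Measure.isProbabilityMeasure_map (μ := P) hmax.aemeasurable
  have := (P.map X).smul_finite (ENNReal.ofReal_ne_top (r := p))
  have := (P.map Y).smul_finite (ENNReal.ofReal_ne_top (r := 1 - p))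
  have hmix : ∀ u, (ENNReal.ofReal p • P.map X + ENNReal.ofReal (1 - p) • P.map Y) (Ioi u) =
      ENNReal.ofReal p * P.map X (Ioi u) + ENNReal.ofReal (1 - p) * P.map Y (Ioi u) := by
    simp
  have hXM := map_Ioi_le_map_Ioi (P := P) hX hmax fun ω => le_max_left _ _
  have hYM := map_Ioi_le_map_Ioi (P := P) hY hmax fun ω => le_max_right _ _
  have hM : ∀ u, 0 < P.map (fun ω => max (X ω) (Y ω)) (Ioi u) := fun u =>
    calc 0 < P {ω | u < X ω} := hXub u
      _ = P.map X (Ioi u) := (map_apply_Ioi hX u).symm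
      _ ≤ _ := hXM u
  set m := ENNReal.ofReal (min p (1 - p))
  have hm : m ≠ 0 := (ENNReal.ofReal_pos.mpr (lt_min hp (sub_pos.mpr hp1))).ne'
  refine (memJg_iff_of_Ioi_le hM ENNReal.one_ne_top (ENNReal.inv_ne_top.mpr hm)
    (fun u => ?_) (fun u => ?_)).symm
  · calc _ ≤ ENNReal.ofReal p * P.map (fun ω => max (X ω) (Y ω)) (Ioi u)
          + ENNReal.ofReal (1 - p) * P.map (fun ω => max (X ω) (Y ω)) (Ioi u) := by
          rw [hmix]; gcongr _ * ?_ + _ * ?_; exacts [hXM u, hYM u]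
      _ = 1 * P.map (fun ω => max (X ω) (Y ω)) (Ioi u) := by
          rw [← add_mul, ← ENNReal.ofReal_add hp.le (sub_pos.mpr hp1).le, add_sub_cancel,
            ENNReal.ofReal_one]
  · rw [← ENNReal.mul_le_iff_le_inv hm ENNReal.ofReal_ne_top, hmix]
    calc m * P.map (fun ω => max (X ω) (Y ω)) (Ioi u)
        ≤ m * P.map X (Ioi u) + m * P.map Y (Ioi u) := by
          rw [← mul_add]; gcongr; exact map_max_Ioi_le hX hY u
      _ ≤ _ := by
          gcongr ?_ * _ + ?_ * _ <;> exact ENNReal.ofReal_le_ofReal (by simp)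

end RandomVariables

theorem stmt14_general {Ω : Type*} [MeasurableSpace Ω] (P : Measure Ω) [IsProbabilityMeasure P]
    (X Y : Ω → ℝ) (hX : Measurable X) (hY : Measurable Y)
    (hXnn : ∀ ω, 0 ≤ X ω) (hYnn : ∀ ω, 0 ≤ Y ω)
    (hXub : ∀ t : ℝ, 0 < P {ω | t < X ω})
    (hind : ProbabilityTheory.IndepFun X Y P) :
    (MemJg (Measure.map (fun ω => max (X ω) (Y ω)) P)
        ↔ MemJg (Measure.map (fun ω => X ω + Y ω) P)) ∧
    (MemJg (Measure.map (fun ω => X ω + Y ω) P)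
        ↔ ∀ p : ℝ, 0 < p → p < 1 →
            MemJg (ENNReal.ofReal p • Measure.map X P
              + ENNReal.ofReal (1 - p) • Measure.map Y P)) := by
  have hsum := memJg_map_max_iff_map_add hX hY hXnn hYnn hXub hind
  have hmix := fun p => memJg_map_max_iff_mixture (p := p) hX hY hXub
  refine ⟨hsum, fun hJ p hp hp1 => (hmix p hp hp1).mp (hsum.mpr hJ), fun hJ => ?_⟩
  exact hsum.mp ((hmix (1 / 2) (by norm_num) (by norm_num)).mpr (hJ _ (by norm_num) (by norm_num)))

theorem stmt14 {Ω : Type*} [MeasurableSpace Ω] (P : Measure Ω) [IsProbabilityMeasure P]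
    (X Y : Ω → ℝ) (hX : Measurable X) (hY : Measurable Y)
    (hXnn : ∀ ω, 0 ≤ X ω) (hYnn : ∀ ω, 0 ≤ Y ω)
    (hXub : ∀ t : ℝ, 0 < P {ω | t < X ω}) (hYub : ∀ t : ℝ, 0 < P {ω | t < Y ω})
    (hind : ProbabilityTheory.IndepFun X Y P)
    (hXJ : MemJg (Measure.map X P)) (hYJ : MemJg (Measure.map Y P)) :
    (MemJg (Measure.map (fun ω => max (X ω) (Y ω)) P)
        ↔ MemJg (Measure.map (fun ω => X ω + Y ω) P)) ∧
    (MemJg (Measure.map (fun ω => X ω + Y ω) P)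
        ↔ ∀ p : ℝ, 0 < p → p < 1 →
            MemJg (ENNReal.ofReal p • Measure.map X P
              + ENNReal.ofReal (1 - p) • Measure.map Y P)) :=
  stmt14_general P X Y hX hY hXnn hYnn hXub hind
end

section
/- If X and Y are independent nonnegative unbounded random variables whose distributions both belong to 𝓙, then the distribution of the minimum X ∧ Y also belongs to 𝓙. -/
open MeasureTheory Filter Set

/-!
If `μ ∈ 𝓙` then `F̄²*(x) ≤ 4 F̄(x - K)` eventually, for some `K`. Otherwise there are points
`xₙ → ∞` with `F̄²*(xₙ) > 4 F̄(xₙ - n)`, and a slowly growing `g` with `g(xₙ) ≤ n`; when the smaller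
of two summands exceeding `xₙ` in total is at most `g(xₙ)`, the larger one exceeds `xₙ - n`, so
`P(min(X₁, X₂) > g(xₙ) | X₁ + X₂ > xₙ) > 1/2`, contradicting `μ ∈ 𝓙`.

For `Z = X ∧ Y` the event `{min(Z₁, Z₂) > g(x), Z₁ + Z₂ > x}` is an upper set of the plane, so it
forces the same event for the independent pairs `(X₁, X₂)` and `(Y₁, Y₂)`; its probability is at
most the product of theirs, hence at most `16 F̄(x - K) Ḡ(x - K)` times the two conditional
probabilities. The denominator `P(Z₁ + Z₂ > x)` is at least `F̄(x - K) Ḡ(x - K) P(Z > K)`, so the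
conditional probability for `Z` is at most a constant times the product of those for `X` and `Y`.
-/

open ProbabilityTheory

section Tails

variable (μ : Measure ℝ)

lemma condPair_nonneg (A : Set (ℝ × ℝ)) (x : ℝ) : 0 ≤ condPair μ A x :=
  div_nonneg ENNReal.toReal_nonneg ENNReal.toReal_nonneg

lemma condPair_mul_tail2 [IsFiniteMeasure μ] (A : Set (ℝ × ℝ)) (x : ℝ) :
    condPair μ A x * tail2 μ x = ((μ.prod μ) (A ∩ {p | x < p.1 + p.2})).toReal :=
  div_mul_cancel_of_imp fun h => le_antisymm
    (h ▸ ENNReal.toReal_mono (measure_ne_top _ _) (measure_mono inter_subset_right))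
    ENNReal.toReal_nonneg

lemma tail_mul_tail_le_tail2 [IsFiniteMeasure μ] (x L : ℝ) :
    tail μ (x - L) * tail μ L ≤ tail2 μ x := by
  rw [tail, tail, tail2, ← ENNReal.toReal_mul, ← Measure.prod_prod]
  refine ENNReal.toReal_mono (measure_ne_top _ _) (measure_mono ?_)
  rintro p ⟨h₁, h₂⟩
  simp only [mem_Ioi] at h₁ h₂
  show x < p.1 + p.2
  linarith

/-- If the smaller summand is at most `K`, the larger one exceeds `x - K`. -/
lemma tail2_le_add_two_mul_tail [IsProbabilityMeasure μ] {v K : ℝ} (hvK : v ≤ K) (x : ℝ) :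
    tail2 μ x ≤ condPair μ {p | v < min p.1 p.2} x * tail2 μ x + 2 * tail μ (x - K) := by
  have hcover : {p : ℝ × ℝ | x < p.1 + p.2} ⊆ ({p | v < min p.1 p.2} ∩ {p | x < p.1 + p.2}) ∪
      (Ioi (x - K) ×ˢ univ ∪ univ ×ˢ Ioi (x - K)) := by
    intro p hp
    change x < p.1 + p.2 at hp
    by_cases hv : v < min p.1 p.2
    · exact Or.inl ⟨hv, hp⟩
    · rcases min_le_iff.mp (not_lt.mp hv) with h | h
      · exact Or.inr (Or.inr ⟨trivial, show x - K < p.2 by linarith⟩)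
      · exact Or.inr (Or.inl ⟨show x - K < p.1 by linarith, trivial⟩)
  have hle : (μ.prod μ) {p | x < p.1 + p.2} ≤
      (μ.prod μ) ({p | v < min p.1 p.2} ∩ {p | x < p.1 + p.2}) + 2 * μ (Ioi (x - K)) := by
    calc _ ≤ _ := measure_mono hcover
      _ ≤ (μ.prod μ) ({p | v < min p.1 p.2} ∩ {p | x < p.1 + p.2}) +
          ((μ.prod μ) (Ioi (x - K) ×ˢ univ) + (μ.prod μ) (univ ×ˢ Ioi (x - K))) :=
        (measure_union_le _ _).trans (add_le_add_right (measure_union_le _ _) _)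
      _ = _ := by rw [Measure.prod_prod, Measure.prod_prod, measure_univ, mul_one, one_mul, two_mul]
  rw [condPair_mul_tail2, tail, tail2]
  have := ENNReal.toReal_mono (by finiteness) hle
  rwa [ENNReal.toReal_add (measure_ne_top _ _) (by finiteness), ENNReal.toReal_mul,
    ENNReal.toReal_ofNat] at this

lemma half_lt_condPair_of_four_mul_tail_lt [IsProbabilityMeasure μ] {v K x : ℝ}
    (hvK : v ≤ K) (hx : 4 * tail μ (x - K) < tail2 μ x) :
    1 / 2 < condPair μ {p | v < min p.1 p.2} x := by
  have htail : 0 ≤ tail μ (x - K) := ENNReal.toReal_nonneg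
  have hcover := tail2_le_add_two_mul_tail μ hvK x
  by_contra! h
  nlinarith

end Tails

lemma exists_monotone_unbounded_le_of_forall_exists_le (u : ℕ → ℝ) (hu : ∀ t, ∃ n, t ≤ u n) :
    ∃ g : ℝ → ℝ, (∀ t, 0 ≤ g t) ∧ Monotone g ∧ (∀ M, ∃ t, M < g t) ∧ ∀ n, g (u n) ≤ n := by
  refine ⟨fun t => (sInf {n | t ≤ u n} : ℕ), fun t => Nat.cast_nonneg _, ?_, ?_,
    fun n => Nat.cast_le.mpr (Nat.sInf_le (le_refl (u n)))⟩
  · exact fun s t hst => Nat.cast_le.mpr <|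
      csInf_le_csInf (OrderBot.bddBelow _) (hu t) fun n hn => hst.trans hn
  · intro M
    obtain ⟨N, hN⟩ := exists_nat_gt M
    obtain ⟨b, hb⟩ := ((finite_Iio N).image u).bddAbove
    refine ⟨b + 1, hN.trans_le (Nat.cast_le.mpr (le_csInf (hu _) fun n hn => ?_))⟩
    by_contra! hnN
    have := hb (mem_image_of_mem u hnN)
    change b + 1 ≤ u n at hn
    linarith

section ClassJ

variable {μ : Measure ℝ} [IsProbabilityMeasure μ]

lemma MemJg.exists_tail2_le (hJ : MemJg μ) :
    ∃ K, ∀ᶠ x in atTop, tail2 μ x ≤ 4 * tail μ (x - K) := by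
  by_contra! h
  have hfreq (n : ℕ) : ∃ x, (n : ℝ) ≤ x ∧ 4 * tail μ (x - n) < tail2 μ x :=
    ((h n).and_eventually (eventually_ge_atTop _)).exists.imp fun _ hx => hx.symm
  choose u hun hu using hfreq
  obtain ⟨g, hg0, hgm, hgu, hgle⟩ := exists_monotone_unbounded_le_of_forall_exists_le u
    fun t => ⟨⌈t⌉₊, (Nat.le_ceil t).trans (hun _)⟩
  have hlim : Tendsto (fun n => condPair μ {p | g (u n) < min p.1 p.2} (u n)) atTop (nhds 0) :=
    (hJ g hg0 hgm hgu).comp (tendsto_atTop_mono hun tendsto_natCast_atTop_atTop)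
  obtain ⟨n, hn⟩ := (hlim.eventually_lt_const one_half_pos).exists
  exact hn.not_gt (half_lt_condPair_of_four_mul_tail_lt μ (hgle n) (hu n))

lemma MemJg.eventually_tail2_le (hJ : MemJg μ) :
    ∀ᶠ K in atTop, ∀ᶠ x in atTop, tail2 μ x ≤ 4 * tail μ (x - K) := by
  obtain ⟨K₀, hK₀⟩ := hJ.exists_tail2_le
  filter_upwards [eventually_ge_atTop K₀] with K hK
  filter_upwards [hK₀] with x hx
  refine hx.trans (mul_le_mul_of_nonneg_left ?_ (by norm_num))
  exact ENNReal.toReal_mono (measure_ne_top _ _) (measure_mono (Ioi_subset_Ioi (by linarith)))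

end ClassJ

section Minimum

variable {Ω : Type*} [MeasurableSpace Ω] {P : Measure Ω} {X Y : Ω → ℝ}

lemma tail_map_pos [IsFiniteMeasure P] (hX : Measurable X) {t : ℝ} (ht : 0 < P {ω | t < X ω}) :
    0 < tail (P.map X) t :=
  ENNReal.toReal_pos (by rw [Measure.map_apply hX measurableSet_Ioi]; exact ht.ne')
    (measure_ne_top _ _)

namespace ProbabilityTheory.IndepFun

lemma measure_prod_pairs_mem_eq_mul [SFinite P] (hind : IndepFun X Y P)
    (hX : Measurable X) (hY : Measurable Y) {A B : Set (ℝ × ℝ)} (hA : MeasurableSet A)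
    (hB : MeasurableSet B) :
    (P.prod P) {q | (X q.1, X q.2) ∈ A ∧ (Y q.1, Y q.2) ∈ B} =
      ((P.map X).prod (P.map X)) A * ((P.map Y).prod (P.map Y)) B := by
  set F : ℝ → ENNReal := fun a => P.map X (Prod.mk a ⁻¹' A)
  set G : ℝ → ENNReal := fun b => P.map Y (Prod.mk b ⁻¹' B)
  have hF : Measurable F := measurable_measure_prodMk_left hA
  have hG : Measurable G := measurable_measure_prodMk_left hB
  have hS : MeasurableSet {q : Ω × Ω | (X q.1, X q.2) ∈ A ∧ (Y q.1, Y q.2) ∈ B} :=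
    (hA.preimage ((hX.comp measurable_fst).prodMk (hX.comp measurable_snd))).inter
      (hB.preimage ((hY.comp measurable_fst).prodMk (hY.comp measurable_snd)))
  have hslice (ω : Ω) : P (Prod.mk ω ⁻¹' {q | (X q.1, X q.2) ∈ A ∧ (Y q.1, Y q.2) ∈ B}) =
      F (X ω) * G (Y ω) := by
    have hA' := hA.preimage (measurable_prodMk_left (x := X ω))
    have hB' := hB.preimage (measurable_prodMk_left (x := Y ω))
    show _ = P.map X (Prod.mk (X ω) ⁻¹' A) * P.map Y (Prod.mk (Y ω) ⁻¹' B)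
    rw [Measure.map_apply hX hA', Measure.map_apply hY hB',
      ← hind.measure_inter_preimage_eq_mul _ _ hA' hB']
    rfl
  rw [Measure.prod_apply hS, Measure.prod_apply hA, Measure.prod_apply hB, lintegral_congr hslice]
  change _ = (∫⁻ a, F a ∂P.map X) * ∫⁻ b, G b ∂P.map Y
  rw [lintegral_map hF hX, lintegral_map hG hY]
  exact lintegral_mul_eq_lintegral_mul_lintegral_of_indepFun'' (hF.comp hX).aemeasurable
    (hG.comp hY).aemeasurable (hind.comp hF hG)

lemma tail_map_min (hind : IndepFun X Y P) (hX : Measurable X) (hY : Measurable Y)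
    (t : ℝ) :
    tail (P.map fun ω => min (X ω) (Y ω)) t = tail (P.map X) t * tail (P.map Y) t := by
  rw [tail, tail, tail, ← ENNReal.toReal_mul, Measure.map_apply (hX.min hY) measurableSet_Ioi,
    Measure.map_apply hX measurableSet_Ioi, Measure.map_apply hY measurableSet_Ioi,
    ← hind.measure_inter_preimage_eq_mul _ _ measurableSet_Ioi measurableSet_Ioi]
  congr 2
  ext ω
  simp

/-- A pair of minima lying in an upper set forces both the `X`-pair and the `Y`-pair into it. -/
lemma prod_map_min_le_of_isUpperSet [SFinite P] (hind : IndepFun X Y P)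
    (hX : Measurable X) (hY : Measurable Y) {E : Set (ℝ × ℝ)} (hE : MeasurableSet E)
    (hEu : IsUpperSet E) :
    ((P.map fun ω => min (X ω) (Y ω)).prod (P.map fun ω => min (X ω) (Y ω))) E ≤
      ((P.map X).prod (P.map X)) E * ((P.map Y).prod (P.map Y)) E := by
  have hm := hX.min hY
  rw [Measure.map_prod_map P P hm hm, Measure.map_apply (hm.prodMap hm) hE,
    ← hind.measure_prod_pairs_mem_eq_mul hX hY hE hE]
  exact measure_mono fun q hq =>
    ⟨hEu (Prod.mk_le_mk.mpr ⟨min_le_left _ _, min_le_left _ _⟩) hq,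
      hEu (Prod.mk_le_mk.mpr ⟨min_le_right _ _, min_le_right _ _⟩) hq⟩

lemma condPair_map_min_le [IsFiniteMeasure P] (hind : IndepFun X Y P)
    (hX : Measurable X) (hY : Measurable Y) {A : Set (ℝ × ℝ)} (hA : MeasurableSet A)
    (hAu : IsUpperSet A)
    {x L C : ℝ} (hXx : tail2 (P.map X) x ≤ C * tail (P.map X) (x - L))
    (hYx : tail2 (P.map Y) x ≤ C * tail (P.map Y) (x - L))
    (hL : 0 < tail (P.map fun ω => min (X ω) (Y ω)) L) :
    condPair (P.map fun ω => min (X ω) (Y ω)) A x ≤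
      condPair (P.map X) A x * condPair (P.map Y) A x *
        (C ^ 2 / tail (P.map fun ω => min (X ω) (Y ω)) L) := by
  set ρ := P.map fun ω => min (X ω) (Y ω)
  set S : Set (ℝ × ℝ) := {p | x < p.1 + p.2}
  have hSu : IsUpperSet S := fun a b hab (ha : x < a.1 + a.2) =>
    show x < b.1 + b.2 by linarith [hab.1, hab.2]
  have hS : MeasurableSet S := measurableSet_lt measurable_const (measurable_fst.add measurable_snd)
  have hnum : ((ρ.prod ρ) (A ∩ S)).toReal ≤
      (((P.map X).prod (P.map X)) (A ∩ S)).toReal *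
        (((P.map Y).prod (P.map Y)) (A ∩ S)).toReal := by
    rw [← ENNReal.toReal_mul]
    exact ENNReal.toReal_mono (by finiteness)
      (hind.prod_map_min_le_of_isUpperSet hX hY (hA.inter hS) (hAu.inter hSu))
  have hXb : (((P.map X).prod (P.map X)) (A ∩ S)).toReal ≤
      condPair (P.map X) A x * (C * tail (P.map X) (x - L)) := by
    rw [← condPair_mul_tail2]
    exact mul_le_mul_of_nonneg_left hXx (condPair_nonneg _ _ _)
  have hYb : (((P.map Y).prod (P.map Y)) (A ∩ S)).toReal ≤
      condPair (P.map Y) A x * (C * tail (P.map Y) (x - L)) := by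
    rw [← condPair_mul_tail2]
    exact mul_le_mul_of_nonneg_left hYx (condPair_nonneg _ _ _)
  have hc : 0 ≤ condPair (P.map X) A x * condPair (P.map Y) A x * (C ^ 2 / tail ρ L) :=
    mul_nonneg (mul_nonneg (condPair_nonneg _ _ _) (condPair_nonneg _ _ _))
      (div_nonneg (sq_nonneg C) hL.le)
  refine div_le_of_le_mul₀ ENNReal.toReal_nonneg hc ?_
  calc ((ρ.prod ρ) (A ∩ S)).toReal
      ≤ condPair (P.map X) A x * (C * tail (P.map X) (x - L)) *
          (condPair (P.map Y) A x * (C * tail (P.map Y) (x - L))) :=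
        hnum.trans (mul_le_mul hXb hYb ENNReal.toReal_nonneg (ENNReal.toReal_nonneg.trans hXb))
    _ = condPair (P.map X) A x * condPair (P.map Y) A x * (C ^ 2 / tail ρ L) *
          (tail ρ (x - L) * tail ρ L) := by
        rw [hind.tail_map_min hX hY (x - L)]
        field_simp
    _ ≤ _ := mul_le_mul_of_nonneg_left (tail_mul_tail_le_tail2 ρ x L) hc

end ProbabilityTheory.IndepFun

end Minimum

theorem stmt15_general {Ω : Type*} [MeasurableSpace Ω] (P : Measure Ω) [IsProbabilityMeasure P]
    (X Y : Ω → ℝ) (hX : Measurable X) (hY : Measurable Y)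
    (hXub : ∀ t : ℝ, 0 < P {ω | t < X ω}) (hYub : ∀ t : ℝ, 0 < P {ω | t < Y ω})
    (hind : ProbabilityTheory.IndepFun X Y P)
    (hXJ : MemJg (Measure.map X P)) (hYJ : MemJg (Measure.map Y P)) :
    MemJg (Measure.map (fun ω => min (X ω) (Y ω)) P) := by
  have := Measure.isProbabilityMeasure_map (μ := P) hX.aemeasurable
  have := Measure.isProbabilityMeasure_map (μ := P) hY.aemeasurable
  intro g hg0 hgm hgu
  obtain ⟨L, hXL, hYL⟩ := (hXJ.eventually_tail2_le.and hYJ.eventually_tail2_le).exists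
  have hL : 0 < tail (P.map fun ω => min (X ω) (Y ω)) L := by
    rw [hind.tail_map_min hX hY]
    exact mul_pos (tail_map_pos hX (hXub L)) (tail_map_pos hY (hYub L))
  have hlim := ((hXJ g hg0 hgm hgu).mul (hYJ g hg0 hgm hgu)).mul_const
    (4 ^ 2 / tail (P.map fun ω => min (X ω) (Y ω)) L)
  rw [zero_mul, zero_mul] at hlim
  refine squeeze_zero' (.of_forall fun x => condPair_nonneg _ _ _) ?_ hlim
  filter_upwards [hXL, hYL] with x hXx hYx
  exact hind.condPair_map_min_le hX hY
    (measurableSet_lt measurable_const (measurable_fst.min measurable_snd))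
    (fun _ _ hab ha => ha.trans_le (min_le_min hab.1 hab.2)) hXx hYx hL

theorem stmt15 {Ω : Type*} [MeasurableSpace Ω] (P : Measure Ω) [IsProbabilityMeasure P]
    (X Y : Ω → ℝ) (hX : Measurable X) (hY : Measurable Y)
    (hXnn : ∀ ω, 0 ≤ X ω) (hYnn : ∀ ω, 0 ≤ Y ω)
    (hXub : ∀ t : ℝ, 0 < P {ω | t < X ω}) (hYub : ∀ t : ℝ, 0 < P {ω | t < Y ω})
    (hind : ProbabilityTheory.IndepFun X Y P)
    (hXJ : MemJg (Measure.map X P)) (hYJ : MemJg (Measure.map Y P)) :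
    MemJg (Measure.map (fun ω => min (X ω) (Y ω)) P) :=
  stmt15_general P X Y hX hY hXub hYub hind hXJ hYJ
end

section
/- Let X, Y be independent nonnegative random variables. For any nonnegative unbounded nondecreasing g, limsup_{x→∞} P(X₁+X₂>x, min(X₁,X₂)>g(x)) / P(Y₁+Y₂>x, min(Y₁,Y₂)>g(x)) ≤ (limsup_{x→∞} F̄(x)/Ḡ(x))², where X₁,X₂ are i.i.d. copies of X and Y₁,Y₂ i.i.d. copies of Y, with distributions F and G respectively. -/
open MeasureTheory Filter Set
open scoped ENNReal Topology

/-! If `μ (Ioi t) ≤ c * ν (Ioi t)` for all `t ≥ T` and `T ≤ t₀`, every section of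
`{p | x < p.1 + p.2 ∧ t₀ < min p.1 p.2}` is empty or a tail `Ioi (max t₀ (x - s))`, so by Tonelli
replacing one factor `μ` of the product by `ν` costs at most a factor `c`; doing this in both
coordinates gives `c ^ 2`. As `g` is eventually above `T`, the ratio of the product measures is
eventually at most `c ^ 2` for every `c` above the limsup of the tail ratios. -/

def sumMinSet (x t₀ : ℝ) : Set (ℝ × ℝ) := {p | x < p.1 + p.2 ∧ t₀ < min p.1 p.2}

lemma measurableSet_sumMinSet (x t₀ : ℝ) : MeasurableSet (sumMinSet x t₀) :=
  (measurableSet_lt measurable_const (measurable_fst.add measurable_snd)).inter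
    (measurableSet_lt measurable_const (measurable_fst.min measurable_snd))

lemma preimage_swap_sumMinSet (x t₀ : ℝ) : Prod.swap ⁻¹' sumMinSet x t₀ = sumMinSet x t₀ := by
  ext p
  simp only [sumMinSet, mem_preimage, mem_ofPred_eq, Prod.fst_swap, Prod.snd_swap, add_comm,
    min_comm]

lemma preimage_mk_sumMinSet (x t₀ s : ℝ) :
    (fun t => (t, s)) ⁻¹' sumMinSet x t₀ = if t₀ < s then Ioi (max t₀ (x - s)) else ∅ := by
  ext t
  split_ifs with hs
  · simp only [sumMinSet, mem_preimage, mem_ofPred_eq, mem_Ioi, lt_min_iff, max_lt_iff,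
      sub_lt_iff_lt_add]
    tauto
  · simp only [sumMinSet, mem_preimage, mem_ofPred_eq, mem_empty_iff_false, iff_false, lt_min_iff]
    tauto

section TailDomination

variable (μ ν : Measure ℝ) {c : ℝ≥0∞} {T t₀ : ℝ}

lemma measure_preimage_mk_sumMinSet_le (hc : ∀ t, T ≤ t → μ (Ioi t) ≤ c * ν (Ioi t))
    (ht₀ : T ≤ t₀) (x s : ℝ) :
    μ ((fun t => (t, s)) ⁻¹' sumMinSet x t₀) ≤ c * ν ((fun t => (t, s)) ⁻¹' sumMinSet x t₀) := by
  rw [preimage_mk_sumMinSet]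
  split_ifs
  · exact hc _ (ht₀.trans (le_max_left _ _))
  · simp

variable [SFinite μ] [SFinite ν] (τ : Measure ℝ) [SFinite τ]

lemma prod_sumMinSet_le_left (hc : ∀ t, T ≤ t → μ (Ioi t) ≤ c * ν (Ioi t)) (ht₀ : T ≤ t₀)
    (x : ℝ) : μ.prod τ (sumMinSet x t₀) ≤ c * ν.prod τ (sumMinSet x t₀) := by
  rw [Measure.prod_apply_symm (measurableSet_sumMinSet x t₀),
    Measure.prod_apply_symm (measurableSet_sumMinSet x t₀),
    ← lintegral_const_mul _ (measurable_measure_prodMk_right (measurableSet_sumMinSet x t₀))]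
  exact lintegral_mono (measure_preimage_mk_sumMinSet_le μ ν hc ht₀ x)

lemma prod_sumMinSet_le_right (hc : ∀ t, T ≤ t → μ (Ioi t) ≤ c * ν (Ioi t)) (ht₀ : T ≤ t₀)
    (x : ℝ) : τ.prod μ (sumMinSet x t₀) ≤ c * τ.prod ν (sumMinSet x t₀) := by
  have hswap : ∀ (ρ : Measure ℝ) [SFinite ρ],
      τ.prod ρ (sumMinSet x t₀) = ρ.prod τ (sumMinSet x t₀) := fun ρ _ => by
    rw [← Measure.prod_swap, Measure.map_apply measurable_swap (measurableSet_sumMinSet x t₀),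
        preimage_swap_sumMinSet]
  rw [hswap, hswap]
  exact prod_sumMinSet_le_left μ ν τ hc ht₀ x

lemma prod_self_sumMinSet_le (hc : ∀ t, T ≤ t → μ (Ioi t) ≤ c * ν (Ioi t)) (ht₀ : T ≤ t₀)
    (x : ℝ) : μ.prod μ (sumMinSet x t₀) ≤ c ^ 2 * ν.prod ν (sumMinSet x t₀) :=
  calc μ.prod μ (sumMinSet x t₀)
      ≤ c * ν.prod μ (sumMinSet x t₀) := prod_sumMinSet_le_left μ ν μ hc ht₀ x
    _ ≤ c * (c * ν.prod ν (sumMinSet x t₀)) := by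
      gcongr; exact prod_sumMinSet_le_right μ ν ν hc ht₀ x
    _ = c ^ 2 * ν.prod ν (sumMinSet x t₀) := by rw [sq, mul_assoc]

end TailDomination

lemma ENNReal.le_pow_of_forall_lt {a b : ℝ≥0∞} {n : ℕ} (hn : n ≠ 0)
    (h : ∀ c, b < c → c ≠ ⊤ → a ≤ c ^ n) : a ≤ b ^ n := by
  rcases eq_or_ne b ⊤ with rfl | hb
  · simp [ENNReal.top_pow hn]
  have : NeBot (𝓝[>] b) := nhdsGT_neBot_of_exists_gt ⟨⊤, hb.lt_top⟩
  have hpow := (ENNReal.continuous_pow n).tendsto b |>.mono_left (nhdsWithin_le_nhds (s := Ioi b))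
  refine ge_of_tendsto hpow ?_
  filter_upwards [self_mem_nhdsWithin, nhdsWithin_le_nhds (Iio_mem_nhds hb.lt_top)]
    with c hbc hc
  exact h c hbc hc.ne

theorem stmt16_general (μ ν : Measure ℝ) [IsProbabilityMeasure μ] [IsProbabilityMeasure ν]
    (g : ℝ → ℝ) (hgmono : Monotone g) (hgub : ∀ M, ∃ x, M < g x) :
    limsup (fun x : ℝ =>
        (μ.prod μ) {p | x < p.1 + p.2 ∧ g x < min p.1 p.2}
          / (ν.prod ν) {p | x < p.1 + p.2 ∧ g x < min p.1 p.2}) atTop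
      ≤ (limsup (fun x : ℝ => μ (Set.Ioi x) / ν (Set.Ioi x)) atTop) ^ 2 := by
  refine ENNReal.le_pow_of_forall_lt two_ne_zero fun c hc hc_top => ?_
  have hc₀ : c ≠ 0 := (pos_of_gt hc).ne'
  obtain ⟨T, hT⟩ : ∃ T, ∀ t, T ≤ t → μ (Ioi t) ≤ c * ν (Ioi t) :=
    eventually_atTop.1 <| (eventually_lt_of_limsup_lt hc).mono fun t ht =>
      (ENNReal.div_le_iff_le_mul (Or.inr hc_top) (Or.inr hc₀)).1 ht.le
  obtain ⟨x₀, hx₀⟩ := hgub T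
  refine limsup_le_of_le (by isBoundedDefault) ?_
  filter_upwards [eventually_ge_atTop x₀] with x hx
  rw [ENNReal.div_le_iff_le_mul (Or.inr (ENNReal.pow_ne_top hc_top)) (Or.inr (pow_ne_zero 2 hc₀))]
  exact prod_self_sumMinSet_le μ ν hT (hx₀.le.trans (hgmono hx)) x

theorem stmt16 (μ ν : Measure ℝ) [IsProbabilityMeasure μ] [IsProbabilityMeasure ν]
    (hμnn : μ (Set.Iio 0) = 0) (hμub : ∀ x : ℝ, 0 < μ (Set.Ioi x))
    (hνnn : ν (Set.Iio 0) = 0) (hνub : ∀ x : ℝ, 0 < ν (Set.Ioi x))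
    (g : ℝ → ℝ) (hg0 : ∀ x, 0 ≤ g x) (hgmono : Monotone g) (hgub : ∀ M, ∃ x, M < g x) :
    limsup (fun x : ℝ =>
        (μ.prod μ) {p | x < p.1 + p.2 ∧ g x < min p.1 p.2}
          / (ν.prod ν) {p | x < p.1 + p.2 ∧ g x < min p.1 p.2}) atTop
      ≤ (limsup (fun x : ℝ => μ (Set.Ioi x) / ν (Set.Ioi x)) atTop) ^ 2 :=
  stmt16_general μ ν g hgmono hgub
end

section
/- (Kesten-type bound) If F ∈ 𝓞𝓢 with c_F := limsup_{x→∞} F̄²*(x)/F̄(x) < ∞, then for every ε > 0 there exists c > 0 such that for all n ≥ 1 and all x ≥ 0, F̄^{n*}(x) ≤ c (c_F + ε − 1)ⁿ F̄(x). -/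
open MeasureTheory Filter Set

/-! With `T = c_F + ε`, pick `x₁ ≥ 0` beyond which `F̄²* ≤ T F̄`. Split
`F̄^{(n+1)*}(x) = ∫ F̄^{n*}(x - y) dF(y)` at `y = x - x₁`. If `F̄^{n*} ≤ cₙ F̄` on `[x₁, ∞)`,
the part `y ≤ x - x₁` is at most `cₙ (F̄²*(x) - F̄(x)) ≤ cₙ (T - 1) F̄(x)`, because the mass
`y > x` alone contributes `F̄(x)` to `F̄²*(x)`; the part `y > x - x₁` is at most
`F̄(x - x₁) ≤ F̄²*(x) / F̄(x₁) ≤ T F̄(x) / F̄(x₁)`. So `cₙ₊₁ = (T - 1) cₙ + T / F̄(x₁)`, `c₀ = 0`,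
which grows like `(T - 1)ⁿ` since `T - 1 > 1`: for a nonnegative variable `F̄²* ≥ 2 F̄ - F̄²`,
so `c_F ≥ 2`. -/

open scoped ENNReal Topology

section

variable {μ ν : Measure ℝ}

instance isProbabilityMeasure_conv [IsProbabilityMeasure ν] [IsProbabilityMeasure μ] :
    IsProbabilityMeasure (conv ν μ) :=
  Measure.isProbabilityMeasure_map measurable_add.aemeasurable

instance isProbabilityMeasure_nconv [IsProbabilityMeasure μ] (n : ℕ) :
    IsProbabilityMeasure (nconv μ n) := by
  induction n with
  | zero => exact inferInstanceAs (IsProbabilityMeasure (Measure.dirac 0))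
  | succ n _ => exact inferInstanceAs (IsProbabilityMeasure (conv _ _))

lemma tail2_eq_tail_conv : tail2 μ = tail (conv μ μ) := by
  ext x
  rw [tail, conv, Measure.map_apply measurable_add measurableSet_Ioi]
  rfl

lemma conv_Ioi [SFinite ν] [SFinite μ] (x : ℝ) :
    conv ν μ (Ioi x) = ∫⁻ y, ν (Ioi (x - y)) ∂μ := by
  rw [conv, Measure.map_apply measurable_add measurableSet_Ioi,
    Measure.prod_apply_symm (measurable_add measurableSet_Ioi)]
  congr! 3 with y
  ext a
  simp [sub_lt_iff_lt_add]

lemma measure_Ioi_mul_measure_Ioi_le_conv [SFinite ν] [SFinite μ] (a b : ℝ) :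
    ν (Ioi a) * μ (Ioi b) ≤ conv ν μ (Ioi (a + b)) := by
  rw [conv, Measure.map_apply measurable_add measurableSet_Ioi, ← Measure.prod_prod]
  exact measure_mono fun p ⟨ha, hb⟩ => show a + b < p.1 + p.2 from add_lt_add ha hb

lemma measure_Ioi_of_neg [IsProbabilityMeasure μ] (hμ : μ (Iio 0) = 0) {t : ℝ} (ht : t < 0) :
    μ (Ioi t) = 1 := by
  refine le_antisymm prob_le_one ?_
  rw [← (prob_compl_eq_one_iff measurableSet_Iio).2 hμ]
  exact measure_mono fun a (ha : ¬ a < 0) => ht.trans_le (not_lt.1 ha)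

lemma tail_eq_one_sub_measureReal_Iic [IsProbabilityMeasure μ] (x : ℝ) :
    tail μ x = 1 - μ.real (Iic x) := by
  rw [← probReal_compl_eq_one_sub measurableSet_Iic, compl_Iic]
  rfl

lemma tail_tendsto_zero [IsProbabilityMeasure μ] : Tendsto (tail μ) atTop (𝓝 0) := by
  have h : tail μ = fun x => 1 - ProbabilityTheory.cdf μ x := by
    ext x
    rw [ProbabilityTheory.cdf_eq_real, tail_eq_one_sub_measureReal_Iic]
  rw [h, ← sub_self (1 : ℝ)]
  exact tendsto_const_nhds.sub (ProbabilityTheory.tendsto_cdf_atTop μ)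

lemma setLIntegral_Iic_add_measure_Ioi_le_conv [IsProbabilityMeasure ν] [IsProbabilityMeasure μ]
    (hν : ν (Iio 0) = 0) {s x : ℝ} (hs : s ≤ x) :
    ∫⁻ y in Iic s, ν (Ioi (x - y)) ∂μ + μ (Ioi x) ≤ conv ν μ (Ioi x) := by
  have hIoi : ∫⁻ y in Ioi x, ν (Ioi (x - y)) ∂μ = μ (Ioi x) := by
    rw [setLIntegral_congr_fun measurableSet_Ioi fun y (hy : x < y) =>
      measure_Ioi_of_neg hν (sub_neg.2 hy), setLIntegral_one]
  rw [← hIoi, ← lintegral_union measurableSet_Ioi (Iic_disjoint_Ioi hs), conv_Ioi]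
  exact setLIntegral_le_lintegral _ _

lemma measure_Ioi_mul_measure_Iic_add_le_conv [IsProbabilityMeasure μ] (hμ : μ (Iio 0) = 0)
    (x : ℝ) : μ (Ioi x) * μ (Iic x) + μ (Ioi x) ≤ conv μ μ (Ioi x) := by
  refine le_trans (add_le_add ?_ le_rfl)
    (setLIntegral_Iic_add_measure_Ioi_le_conv hμ le_rfl)
  rw [← setLIntegral_const]
  have hnonneg : ∀ᵐ y ∂μ, 0 ≤ y := by
    rw [ae_iff]
    simpa [← Iio_def] using hμ
  refine setLIntegral_mono_ae' measurableSet_Iic ?_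
  filter_upwards [hnonneg] with y hy _
  exact measure_mono (Ioi_subset_Ioi (sub_le_self x hy))

lemma conv_Ioi_le [IsProbabilityMeasure ν] [IsProbabilityMeasure μ] (hμ : μ (Iio 0) = 0)
    {x₁ : ℝ} {a T : ℝ≥0∞} (hx₁ : 0 ≤ x₁) (hp : μ (Ioi x₁) ≠ 0) (hT : 1 ≤ T)
    (h2 : ∀ x ≥ x₁, conv μ μ (Ioi x) ≤ T * μ (Ioi x))
    (hν : ∀ t ≥ x₁, ν (Ioi t) ≤ a * μ (Ioi t)) (x : ℝ) :
    conv ν μ (Ioi x) ≤ (a * (T - 1) + T / μ (Ioi x₁)) * μ (Ioi x) := by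
  have hp_top : μ (Ioi x₁) ≠ ∞ := measure_ne_top _ _
  rcases lt_or_ge x x₁ with hx | hx
  · calc conv ν μ (Ioi x) ≤ 1 := prob_le_one
      _ = μ (Ioi x₁) / μ (Ioi x₁) := (ENNReal.div_self hp hp_top).symm
      _ ≤ T * μ (Ioi x) / μ (Ioi x₁) := by
          gcongr
          exact (measure_mono (Ioi_subset_Ioi hx.le)).trans (le_mul_of_one_le_left' hT)
      _ ≤ _ := by
          rw [ENNReal.mul_div_right_comm]
          gcongr
          exact le_add_self
  rw [conv_Ioi, ← lintegral_add_compl _ (measurableSet_Iic (a := x - x₁)), compl_Iic, add_mul]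
  gcongr ?_ + ?_
  · have hmeas : Measurable fun y => μ (Ioi (x - y)) :=
      Monotone.measurable fun y z hyz => measure_mono (Ioi_subset_Ioi (by linarith))
    have hJ : ∫⁻ y in Iic (x - x₁), μ (Ioi (x - y)) ∂μ ≤ (T - 1) * μ (Ioi x) := by
      rw [ENNReal.sub_mul fun _ _ => measure_ne_top _ _, one_mul]
      exact ENNReal.le_sub_of_add_le_right (measure_ne_top _ _)
        ((setLIntegral_Iic_add_measure_Ioi_le_conv hμ (sub_le_self x hx₁)).trans (h2 x hx))
    calc ∫⁻ y in Iic (x - x₁), ν (Ioi (x - y)) ∂μ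
        ≤ ∫⁻ y in Iic (x - x₁), a * μ (Ioi (x - y)) ∂μ :=
          setLIntegral_mono' measurableSet_Iic fun y (hy : y ≤ x - x₁) => hν _ (by linarith)
      _ = a * ∫⁻ y in Iic (x - x₁), μ (Ioi (x - y)) ∂μ := lintegral_const_mul a hmeas
      _ ≤ a * (T - 1) * μ (Ioi x) := by rw [mul_assoc]; gcongr
  · calc ∫⁻ y in Ioi (x - x₁), ν (Ioi (x - y)) ∂μ ≤ ∫⁻ y in Ioi (x - x₁), 1 ∂μ :=
          lintegral_mono fun _ => prob_le_one
      _ = μ (Ioi (x - x₁)) := setLIntegral_one _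
      _ ≤ T * μ (Ioi x) / μ (Ioi x₁) := by
          rw [ENNReal.le_div_iff_mul_le (Or.inl hp) (Or.inl hp_top)]
          calc μ (Ioi (x - x₁)) * μ (Ioi x₁) ≤ conv μ μ (Ioi (x - x₁ + x₁)) :=
                measure_Ioi_mul_measure_Ioi_le_conv _ _
            _ ≤ T * μ (Ioi x) := by rw [sub_add_cancel]; exact h2 x hx
      _ = T / μ (Ioi x₁) * μ (Ioi x) := ENNReal.mul_div_right_comm

lemma measure_Ioi_le_ofReal_mul_iff [IsFiniteMeasure ν] [IsFiniteMeasure μ] {c : ℝ} (hc : 0 ≤ c)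
    (x : ℝ) : ν (Ioi x) ≤ ENNReal.ofReal c * μ (Ioi x) ↔ tail ν x ≤ c * tail μ x := by
  rw [tail, tail, ← ENNReal.le_ofReal_iff_toReal_le (measure_ne_top _ _) (by positivity),
    ENNReal.ofReal_mul hc, ENNReal.ofReal_toReal (measure_ne_top _ _)]

/-- The constant is the closed form of `cₙ₊₁ = (T - 1) cₙ + T / F̄(x₁)`, `c₀ = 0`. -/
lemma tail_nconv_le [IsProbabilityMeasure μ] (hμ : μ (Iio 0) = 0) {x₁ T : ℝ} (hx₁ : 0 ≤ x₁)
    (hp : 0 < tail μ x₁) (hT : 2 < T) (h2 : ∀ x ≥ x₁, tail2 μ x ≤ T * tail μ x) (n : ℕ)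
    {x : ℝ} (hx : 0 ≤ x) :
    tail (nconv μ n) x ≤ T / tail μ x₁ / (T - 2) * ((T - 1) ^ n - 1) * tail μ x := by
  have hcoef : ∀ n : ℕ, 0 ≤ T / tail μ x₁ / (T - 2) * ((T - 1) ^ n - 1) := fun n =>
    mul_nonneg (div_nonneg (div_nonneg (by linarith) hp.le) (by linarith))
      (sub_nonneg.2 (one_le_pow₀ (by linarith)))
  have h2' : ∀ x ≥ x₁, conv μ μ (Ioi x) ≤ ENNReal.ofReal T * μ (Ioi x) := fun x hx => by
    rw [measure_Ioi_le_ofReal_mul_iff (by linarith), ← tail2_eq_tail_conv]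
    exact h2 x hx
  rw [← measure_Ioi_le_ofReal_mul_iff (hcoef n)]
  induction n generalizing x with
  | zero => simp [nconv, hx.not_gt]
  | succ n ih =>
    refine (conv_Ioi_le hμ hx₁ (ENNReal.toReal_pos_iff.1 hp).1.ne'
      (ENNReal.one_le_ofReal.2 (by linarith)) h2' (fun t ht => ih (hx₁.trans ht)) x).trans_eq ?_
    rw [show μ (Ioi x₁) = ENNReal.ofReal (tail μ x₁) from
        (ENNReal.ofReal_toReal (measure_ne_top _ _)).symm,
      ← ENNReal.ofReal_one, ← ENNReal.ofReal_sub _ zero_le_one, ← ENNReal.ofReal_mul (hcoef n),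
      ← ENNReal.ofReal_div_of_pos hp, ← ENNReal.ofReal_add (by nlinarith [hcoef n]) (by positivity)]
    congr 2
    have hT2 : T - 2 ≠ 0 := by linarith
    field_simp
    ring

lemma two_le_limsup_tail2_div_tail [IsProbabilityMeasure μ] (hμ : μ (Iio 0) = 0)
    (hpos : ∀ x, 0 < tail μ x)
    (hbdd : IsBoundedUnder (· ≤ ·) atTop fun y => tail2 μ y / tail μ y) :
    2 ≤ limsup (fun y => tail2 μ y / tail μ y) atTop := by
  have hlow : ∀ x, 2 - tail μ x ≤ tail2 μ x / tail μ x := by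
    intro x
    have h := ENNReal.toReal_mono (measure_ne_top _ _)
      (measure_Ioi_mul_measure_Iic_add_le_conv hμ x)
    rw [ENNReal.toReal_add (by finiteness) (measure_ne_top _ _), ENNReal.toReal_mul] at h
    change tail μ x * μ.real (Iic x) + tail μ x ≤ tail (conv μ μ) x at h
    rw [show μ.real (Iic x) = 1 - tail μ x by linarith [tail_eq_one_sub_measureReal_Iic (μ := μ) x]]
      at h
    rw [le_div_iff₀ (hpos x), tail2_eq_tail_conv]
    linarith
  refine le_of_forall_pos_le_add fun δ hδ => ?_
  have hev : ∀ᶠ y in atTop, 2 - δ ≤ tail2 μ y / tail μ y :=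
    (tail_tendsto_zero.eventually_lt_const hδ).mono fun y hy => by linarith [hlow y]
  linarith [le_limsup_of_frequently_le hev.frequently hbdd]

end

theorem stmt17 (μ : Measure ℝ) [IsProbabilityMeasure μ]
    (hnn : μ (Set.Iio 0) = 0) (hub : ∀ x : ℝ, 0 < μ (Set.Ioi x))
    (hOS : ∃ B : ℝ, ∀ᶠ x in atTop, tail2 μ x / tail μ x ≤ B) :
    ∀ ε : ℝ, 0 < ε → ∃ c : ℝ, 0 < c ∧ ∀ n : ℕ, 1 ≤ n → ∀ x : ℝ, 0 ≤ x →
      tail (nconv μ n) x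
        ≤ c * (limsup (fun y : ℝ => tail2 μ y / tail μ y) atTop + ε - 1) ^ n * tail μ x := by
  intro ε hε
  set cF := limsup (fun y : ℝ => tail2 μ y / tail μ y) atTop
  have hpos : ∀ x, 0 < tail μ x := fun x => ENNReal.toReal_pos (hub x).ne' (measure_ne_top μ _)
  have hbdd : IsBoundedUnder (· ≤ ·) atTop fun y => tail2 μ y / tail μ y := by
    obtain ⟨B, hB⟩ := hOS
    exact isBoundedUnder_of_eventually_le hB
  have hcF : 2 ≤ cF := two_le_limsup_tail2_div_tail hnn hpos hbdd
  obtain ⟨x₀, hx₀⟩ :=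
    eventually_atTop.1 (eventually_lt_of_limsup_lt (lt_add_of_pos_right cF hε) hbdd)
  have h2 : ∀ x ≥ max x₀ 0, tail2 μ x ≤ (cF + ε) * tail μ x := fun x hx =>
    ((div_lt_iff₀ (hpos x)).1 (hx₀ x (le_of_max_le_left hx))).le
  have hc : 0 < (cF + ε) / tail μ (max x₀ 0) / (cF + ε - 2) :=
    div_pos (div_pos (by linarith) (hpos _)) (by linarith)
  refine ⟨_, hc, fun n _ x hx => ?_⟩
  calc tail (nconv μ n) x
      ≤ _ := tail_nconv_le hnn (le_max_right _ _) (hpos _) (by linarith) h2 n hx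
    _ ≤ _ := mul_le_mul_of_nonneg_right (mul_le_mul_of_nonneg_left (sub_le_self _ zero_le_one)
        hc.le) (hpos x).le
end
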